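/- arXiv:2502.18404 — 2 statements merged into one kernel-verified Lean document; each statement's English description precedes it below -/
import Mathlib

section
/- For all n ∈ ℕ, all v1 ≥ 1, and any finite v2 ≤ v1, the increment of the iterate at a no-packet state dominates the increment at a packet state: V_n(v1+1, v2) − V_n(v1, v2) ≤ V_n(v1+1, ∞) − V_n(v1, ∞). -/
/-- Value-iteration iterates for the sampling CMDP.  States are `(v1, v2)` with
`v2 : Option ℕ` (`none` meaning the transmitter holds no packet, `v2 = ∞`). -/
noncomputable def V (α q lam : ℝ) : ℕ → ℕ → Option ℕ → ℝ
  | 0, _, _ => 0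
  | n + 1, v1, v2 =>
      (v1 : ℝ) +
        min
          (lam + α * ((1 - q) * V α q lam n (v1 + 1) (some 1) +
            q * V α q lam n 1 none))
          (match v2 with
            | some w => α * ((1 - q) * V α q lam n (v1 + 1) (some (w + 1)) +
                q * V α q lam n (w + 1) none)
            | none => α * V α q lam n (v1 + 1) none)

/-- `V` is nondecreasing in the first age component, for any second component. -/
lemma V_mono (α q lam : ℝ) (hα : 0 ≤ α) (hq0 : 0 ≤ q) (hq1 : q ≤ 1) :
    ∀ n v1 v2, V α q lam n v1 v2 ≤ V α q lam n (v1 + 1) v2 := by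
  intro n
  induction n with
  | zero => intro v1 v2; simp [V]
  | succ n ih =>
    intro v1 v2
    have h1q : (0:ℝ) ≤ 1 - q := by linarith
    have hcast : ((v1 : ℕ) : ℝ) ≤ ((v1 + 1 : ℕ) : ℝ) := by push_cast; linarith
    cases v2 with
    | none =>
      simp only [V]
      refine add_le_add hcast (min_le_min ?_ ?_)
      · have := ih (v1 + 1) (some 1)
        nlinarith [mul_nonneg (mul_nonneg hα h1q) (sub_nonneg.2 this)]
      · have := ih (v1 + 1) none
        nlinarith [mul_nonneg hα (sub_nonneg.2 this)]
    | some w =>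
      simp only [V]
      refine add_le_add hcast (min_le_min ?_ ?_)
      · have := ih (v1 + 1) (some 1)
        nlinarith [mul_nonneg (mul_nonneg hα h1q) (sub_nonneg.2 this)]
      · have := ih (v1 + 1) (some (w + 1))
        nlinarith [mul_nonneg (mul_nonneg hα h1q) (sub_nonneg.2 this)]

/-- Separability: the increment of `V` in `v1` at a packet state does not
depend on the packet age. -/
lemma V_sep (α q lam : ℝ) :
    ∀ n v1 w, V α q lam n (v1 + 1) (some w) - V α q lam n v1 (some w)
      = V α q lam n (v1 + 1) (some 1) - V α q lam n v1 (some 1) := by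
  intro n
  induction n with
  | zero => intro v1 w; simp [V]
  | succ n ih =>
    intro v1 w
    simp only [V]
    set d : ℝ := V α q lam n (v1 + 1 + 1) (some 1) - V α q lam n (v1 + 1) (some 1) with hd
    have hA : V α q lam n (v1 + 1 + 1) (some 1) = V α q lam n (v1 + 1) (some 1) + d := by
      rw [hd]; ring
    have hw : V α q lam n (v1 + 1 + 1) (some (w + 1))
        = V α q lam n (v1 + 1) (some (w + 1)) + d := by
      have := ih (v1 + 1) (w + 1); linarith
    have h1 : V α q lam n (v1 + 1 + 1) (some (1 + 1))
        = V α q lam n (v1 + 1) (some (1 + 1)) + d := by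
      have := ih (v1 + 1) (1 + 1); linarith
    rw [hA, hw, h1]
    have key : ∀ X Y Z W : ℝ,
        ((v1 + 1 : ℕ) : ℝ) +
          min (lam + α * ((1 - q) * (X + d) + q * Y)) (α * ((1 - q) * (Z + d) + q * W))
        - (((v1 : ℕ) : ℝ) +
          min (lam + α * ((1 - q) * X + q * Y)) (α * ((1 - q) * Z + q * W)))
        = 1 + α * (1 - q) * d := by
      intro X Y Z W
      have e1 : lam + α * ((1 - q) * (X + d) + q * Y)
          = (lam + α * ((1 - q) * X + q * Y)) + α * (1 - q) * d := by ring
      have e2 : α * ((1 - q) * (Z + d) + q * W)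
          = (α * ((1 - q) * Z + q * W)) + α * (1 - q) * d := by ring
      rw [e1, e2, min_add_add_right]
      push_cast; ring
    rw [key, key]

/-- Key lemma: the increment at a no-packet state dominates the increment at
any packet state (no constraints on the ages needed). -/
lemma V_key (α q lam : ℝ) (hα : 0 ≤ α) (hq0 : 0 ≤ q) (hq1 : q ≤ 1) :
    ∀ n v1 w, V α q lam n (v1 + 1) (some w) - V α q lam n v1 (some w)
      ≤ V α q lam n (v1 + 1) none - V α q lam n v1 none := by
  intro n
  induction n with
  | zero => intro v1 w; simp [V]
  | succ n ih =>
    intro v1 w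
    simp only [V]
    set d : ℝ := V α q lam n (v1 + 1 + 1) (some 1) - V α q lam n (v1 + 1) (some 1) with hd
    set D : ℝ := V α q lam n (v1 + 1 + 1) none - V α q lam n (v1 + 1) none with hD
    have hd0 : 0 ≤ d := by
      have := V_mono α q lam hα hq0 hq1 n (v1 + 1) (some 1); rw [hd]; linarith
    have hD0 : 0 ≤ D := by
      have := V_mono α q lam hα hq0 hq1 n (v1 + 1) none; rw [hD]; linarith
    have hdD : d ≤ D := by
      have := ih (v1 + 1) 1; rw [hd, hD]; linarith
    have hA : V α q lam n (v1 + 1 + 1) (some 1) = V α q lam n (v1 + 1) (some 1) + d := by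
      rw [hd]; ring
    have hw : V α q lam n (v1 + 1 + 1) (some (w + 1))
        = V α q lam n (v1 + 1) (some (w + 1)) + d := by
      have := V_sep α q lam n (v1 + 1) (w + 1); linarith
    have hC : V α q lam n (v1 + 1 + 1) none = V α q lam n (v1 + 1) none + D := by
      rw [hD]; ring
    rw [hA, hw, hC]
    set A : ℝ := lam + α * ((1 - q) * V α q lam n (v1 + 1) (some 1)
      + q * V α q lam n 1 none) with hAdef
    set B : ℝ := α * ((1 - q) * V α q lam n (v1 + 1) (some (w + 1))
      + q * V α q lam n (w + 1) none) with hBdef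
    set C : ℝ := α * V α q lam n (v1 + 1) none with hCdef
    have e1 : lam + α * ((1 - q) * (V α q lam n (v1 + 1) (some 1) + d)
        + q * V α q lam n 1 none) = A + α * (1 - q) * d := by rw [hAdef]; ring
    have e2 : α * ((1 - q) * (V α q lam n (v1 + 1) (some (w + 1)) + d)
        + q * V α q lam n (w + 1) none) = B + α * (1 - q) * d := by rw [hBdef]; ring
    have e3 : α * (V α q lam n (v1 + 1) none + D) = C + α * D := by rw [hCdef]; ring
    rw [e1, e2, e3, min_add_add_right]
    have hts : α * (1 - q) * d ≤ α * D := by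
      nlinarith [mul_nonneg hα (sub_nonneg.2 hdD), mul_nonneg (mul_nonneg hα hq0) hd0]
    have hmin : min A C + α * (1 - q) * d ≤ min (A + α * (1 - q) * d) (C + α * D) := by
      refine le_min ?_ ?_
      · have := min_le_left A C; linarith
      · have := min_le_right A C; linarith
    have hcast : ((v1 + 1 : ℕ) : ℝ) = ((v1 : ℕ) : ℝ) + 1 := by push_cast; ring
    rw [hcast]
    linarith

/-- The increment of the iterate in the monitor age at a no-packet state
dominates the increment at any state with a (finite-age) packet. -/
theorem V_increment_none_dominates (α q lam : ℝ) (hα0 : 0 < α) (hα1 : α < 1)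
    (hq0 : 0 < q) (hq1 : q ≤ 1) (hlam : 0 ≤ lam) :
    ∀ n : ℕ, ∀ v1 v2 : ℕ, 1 ≤ v2 → v2 ≤ v1 →
      V α q lam n (v1 + 1) (some v2) - V α q lam n v1 (some v2) ≤
        V α q lam n (v1 + 1) none - V α q lam n v1 none := by
  intro n v1 v2 _ _
  exact V_key α q lam hα0.le hq0.le hq1 n v1 v2
end

section
/- For the limiting discounted value function V and no-packet states s = (v1, ∞), define the action gap G(v1) = V((v1,∞); 0) − V((v1,∞); 1) = α·V(v1+1, ∞) − (λ + α[(1−q)V(v1+1, 1) + q·V(1, ∞)]). Then G is strictly increasing in v1: G(v1+1) > G(v1) for all v1 ≥ 1. -/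
open Filter

/-!
Raising the monitor age by one adds `1` to the immediate cost and, since the age keeps
growing unless a fresh packet is delivered (probability `q`), the same increment again
`α (1 - q)`-discounted at the next step. At states holding a packet both actions keep
this coupling, so `V n (v1 + 1) (some w) - V n v1 (some w)` is exactly the geometric sum
`∑_{i<n} (α (1 - q))^i`; at no-packet states the idle action loses the `q`-reset, so the
same sum is only a lower bound. In the limit both differences are governed by one
constant `c ≥ 1`, and `G (v1 + 1) - G v1 ≥ α c - α (1 - q) c = α q c > 0`.
-/

open Finset

lemma V_succ_some (α q lam : ℝ) (n v1 w : ℕ) :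
    V α q lam n (v1 + 1) (some w) =
      V α q lam n v1 (some w) + ∑ i ∈ range n, (α * (1 - q)) ^ i := by
  induction n generalizing v1 w with
  | zero => simp [V]
  | succ n ih =>
    simp only [V, ih (v1 + 1), geom_sum_succ]
    have hshift : ∀ a b : ℝ, α * ((1 - q) * (a + ∑ i ∈ range n, (α * (1 - q)) ^ i) + q * b) =
        α * ((1 - q) * a + q * b) + α * (1 - q) * ∑ i ∈ range n, (α * (1 - q)) ^ i :=
      fun a b => by ring
    rw [hshift, hshift, ← add_assoc, min_add_add_right]
    push_cast
    ring

lemma V_none_add_geom_sum_le {α q : ℝ} (lam : ℝ) (hα : 0 ≤ α) (hq0 : 0 ≤ q) (hq1 : q ≤ 1)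
    (n v1 : ℕ) :
    V α q lam n v1 none + ∑ i ∈ range n, (α * (1 - q)) ^ i ≤ V α q lam n (v1 + 1) none := by
  induction n generalizing v1 with
  | zero => simp [V]
  | succ n ih =>
    set S := ∑ i ∈ range n, (α * (1 - q)) ^ i
    set A := lam + α * ((1 - q) * V α q lam n (v1 + 1) (some 1) + q * V α q lam n 1 none)
    have hS : 0 ≤ S := sum_nonneg fun i _ => pow_nonneg (mul_nonneg hα (by linarith)) i
    -- the idle branch gains `α S ≥ α (1 - q) S`, the sampling branch exactly `α (1 - q) S`
    have hidle : α * V α q lam n (v1 + 1) none + α * (1 - q) * S ≤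
        α * V α q lam n (v1 + 1 + 1) none := by
      nlinarith [mul_le_mul_of_nonneg_left (ih (v1 + 1)) hα, mul_nonneg (mul_nonneg hα hq0) hS]
    have hsample : lam + α * ((1 - q) * (V α q lam n (v1 + 1) (some 1) + S) +
        q * V α q lam n 1 none) = A + α * (1 - q) * S := by ring
    have hmin : min A (α * V α q lam n (v1 + 1) none) + α * (1 - q) * S ≤
        min (A + α * (1 - q) * S) (α * V α q lam n (v1 + 1 + 1) none) :=
      le_min (add_le_add (min_le_left _ _) le_rfl)
        ((add_le_add (min_le_right _ _) le_rfl).trans hidle)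
    simp only [V, V_succ_some α q lam n (v1 + 1), geom_sum_succ]
    rw [hsample]
    push_cast
    linarith

lemma tendsto_geom_sum_of_tendsto_V_some {α q lam a b : ℝ} {v1 w : ℕ}
    (ha : Tendsto (fun n => V α q lam n v1 (some w)) atTop (nhds a))
    (hb : Tendsto (fun n => V α q lam n (v1 + 1) (some w)) atTop (nhds b)) :
    Tendsto (fun n => ∑ i ∈ range n, (α * (1 - q)) ^ i) atTop (nhds (b - a)) :=
  (hb.sub ha).congr fun n => by rw [V_succ_some]; ring

lemma add_le_of_tendsto_V_none {α q lam a b c : ℝ} {v1 : ℕ} (hα : 0 ≤ α) (hq0 : 0 ≤ q)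
    (hq1 : q ≤ 1) (hc : Tendsto (fun n => ∑ i ∈ range n, (α * (1 - q)) ^ i) atTop (nhds c))
    (ha : Tendsto (fun n => V α q lam n v1 none) atTop (nhds a))
    (hb : Tendsto (fun n => V α q lam n (v1 + 1) none) atTop (nhds b)) :
    a + c ≤ b :=
  le_of_tendsto_of_tendsto' (ha.add hc) hb (V_none_add_geom_sum_le lam hα hq0 hq1 · v1)

lemma one_le_of_tendsto_geom_sum {r c : ℝ} (hr : 0 ≤ r)
    (hc : Tendsto (fun n => ∑ i ∈ range n, r ^ i) atTop (nhds c)) : 1 ≤ c := by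
  refine ge_of_tendsto hc ((eventually_ge_atTop 1).mono fun n hn => ?_)
  simpa using single_le_sum (fun i _ => pow_nonneg hr i) (mem_range.mpr hn)

theorem action_gap_strict_mono_general (α q lam : ℝ) (hα0 : 0 < α)
    (hq0 : 0 < q) (hq1 : q < 1)
    (Vlim : ℕ → Option ℕ → ℝ)
    (hVlim : ∀ v1 v2, Tendsto (fun n => V α q lam n v1 v2) atTop
      (nhds (Vlim v1 v2)))
    (G : ℕ → ℝ)
    (hG : ∀ v1, G v1 = α * Vlim (v1 + 1) none -
      (lam + α * ((1 - q) * Vlim (v1 + 1) (some 1) + q * Vlim 1 none))) :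
    ∀ v1 : ℕ, 1 ≤ v1 → G v1 < G (v1 + 1) := by
  intro v1 _
  have hc := tendsto_geom_sum_of_tendsto_V_some (hVlim (v1 + 1) (some 1)) (hVlim _ _)
  have hc1 := one_le_of_tendsto_geom_sum (mul_nonneg hα0.le (sub_nonneg.mpr hq1.le)) hc
  have hnone := add_le_of_tendsto_V_none hα0.le hq0.le hq1.le hc (hVlim (v1 + 1) none)
    (hVlim _ _)
  rw [hG, hG]
  nlinarith [mul_le_mul_of_nonneg_left hnone hα0.le,
    mul_nonneg (mul_pos hα0 hq0).le (sub_nonneg.mpr hc1), mul_pos hα0 hq0]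

/-- The action gap `G(v1) = V((v1,∞);0) − V((v1,∞);1)` of the limiting
discounted value function at no-packet states is strictly increasing in the
monitor age. -/
theorem action_gap_strict_mono (α q lam : ℝ) (hα0 : 0 < α) (hα1 : α < 1)
    (hq0 : 0 < q) (hq1 : q < 1) (hlam : 0 ≤ lam)
    (Vlim : ℕ → Option ℕ → ℝ)
    (hVlim : ∀ v1 v2, Tendsto (fun n => V α q lam n v1 v2) atTop
      (nhds (Vlim v1 v2)))
    (G : ℕ → ℝ)
    (hG : ∀ v1, G v1 = α * Vlim (v1 + 1) none -
      (lam + α * ((1 - q) * Vlim (v1 + 1) (some 1) + q * Vlim 1 none))) :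
    ∀ v1 : ℕ, 1 ≤ v1 → G v1 < G (v1 + 1) :=
  action_gap_strict_mono_general α q lam hα0 hq0 hq1 Vlim hVlim G hG
end
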